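/- Power-type consequence of the convexity inequality: for p ≥ 2, 0 < α < 1 and a nonnegative function ω ∈ C¹([0,T]), one has |ω(t)|^((p−2)/2)·D^α ω(t) ≥ (2/p)·D^α(|ω|^(p/2))(t) for t ∈ (0,T], where D^α is the left Caputo derivative. -/

import Mathlib

/-- The left Caputo fractional derivative of order `α`. -/
noncomputable def caputo (α : ℝ) (u : ℝ → ℝ) (t : ℝ) : ℝ :=
  (1 / Real.Gamma (1 - α)) * ∫ s in (0:ℝ)..t, (t - s) ^ (-α) * deriv u s

/-!
With `q = p / 2` and `c = ω t`, convexity of `x ↦ x ^ q` on `[0, ∞)` says that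
`F = (1/q) ω ^ q - c ^ (q - 1) ω` attains its minimum over `[0, t]` at `t`, and the Caputo
derivative of a `C¹` function at a point where it is minimal is nonpositive: integrating by
parts on `[0, t - ε]`, the kernel `(t - s) ^ (-α)` is increasing and the boundary term at
`t - ε` is `O(ε ^ (1 - α))`. Linearity of the Caputo derivative finishes the proof.
-/

open Set MeasureTheory Filter Topology intervalIntegral

lemma mul_rpow_sub_one_mul_sub_le_rpow_sub_rpow {q a c : ℝ} (hq : 1 ≤ q) (ha : 0 ≤ a)
    (hc : 0 ≤ c) : q * c ^ (q - 1) * (a - c) ≤ a ^ q - c ^ q := by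
  rcases hc.eq_or_lt with rfl | hc
  · rcases hq.eq_or_lt with rfl | hq
    · simp
    · simp [Real.zero_rpow (by linarith : q - 1 ≠ 0), Real.zero_rpow (by linarith : q ≠ 0),
        Real.rpow_nonneg ha]
  · have bernoulli := one_add_mul_self_le_rpow_one_add (by
      have := div_nonneg ha hc.le; linarith : -1 ≤ a / c - 1) hq
    rw [add_sub_cancel, Real.div_rpow ha hc.le, le_div_iff₀ (by positivity)] at bernoulli
    have : q * c ^ (q - 1) * (a - c) = (1 + q * (a / c - 1)) * c ^ q - c ^ q := by
      rw [Real.rpow_sub_one hc.ne']; field_simp; ring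
    linarith

section

variable {α t : ℝ}

lemma caputo_eq_integral_derivWithin (ht : 0 ≤ t) (u : ℝ → ℝ) :
    caputo α u t =
      1 / Real.Gamma (1 - α) * ∫ s in 0..t, (t - s) ^ (-α) * derivWithin u (Icc 0 t) s := by
  unfold caputo
  congr 1
  refine integral_congr_Ioo_of_le ht fun s hs => ?_
  simp only [derivWithin_of_mem_nhds (Icc_mem_nhds hs.1 hs.2)]

lemma intervalIntegrable_sub_rpow_neg_mul (hα : α < 1) (ht : 0 ≤ t) {f : ℝ → ℝ}
    (hf : ContinuousOn f (Icc 0 t)) :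
    IntervalIntegrable (fun s => (t - s) ^ (-α) * f s) volume 0 t := by
  have hk : IntervalIntegrable (fun s => (t - s) ^ (-α)) volume 0 t := by
    have h := (intervalIntegrable_rpow' (r := -α) (a := 0) (b := t) (by linarith)).comp_sub_left t
    simpa only [sub_zero, sub_self] using h.symm
  rw [intervalIntegrable_iff_integrableOn_Icc_of_le ht] at hk ⊢
  exact hk.mul_continuousOn hf isCompact_Icc

lemma caputo_const_mul_add_const_mul (hα : α < 1) (ht : 0 < t) (a b : ℝ) {u v : ℝ → ℝ}
    (hu : ContDiffOn ℝ 1 u (Icc 0 t)) (hv : ContDiffOn ℝ 1 v (Icc 0 t)) :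
    caputo α (fun s => a * u s + b * v s) t = a * caputo α u t + b * caputo α v t := by
  have hUD := uniqueDiffOn_Icc ht
  have hderiv : EqOn (derivWithin (fun s => a * u s + b * v s) (Icc 0 t))
      (fun s => a * derivWithin u (Icc 0 t) s + b * derivWithin v (Icc 0 t) s) (Icc 0 t) :=
    fun s hs => ((((hu.differentiableOn one_ne_zero s hs).hasDerivWithinAt).const_mul a).add
      (((hv.differentiableOn one_ne_zero s hs).hasDerivWithinAt).const_mul b)).derivWithin
      (hUD s hs)
  have hu' := intervalIntegrable_sub_rpow_neg_mul hα ht.le (hu.continuousOn_derivWithin hUD le_rfl)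
  have hv' := intervalIntegrable_sub_rpow_neg_mul hα ht.le (hv.continuousOn_derivWithin hUD le_rfl)
  simp only [caputo_eq_integral_derivWithin ht.le]
  rw [integral_congr fun s hs => by rw [hderiv (uIcc_of_le ht.le ▸ hs)]]
  simp only [mul_add, mul_left_comm _ a, mul_left_comm _ b]
  rw [integral_add (hu'.const_mul a) (hv'.const_mul b), intervalIntegral.integral_const_mul,
    intervalIntegral.integral_const_mul]
  ring

lemma integral_sub_rpow_neg_mul_le_of_isMinOn (hα : 0 ≤ α) {F F' : ℝ → ℝ}
    (hF : ∀ s ∈ Icc 0 t, HasDerivWithinAt F (F' s) (Icc 0 t) s)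
    (hF' : ContinuousOn F' (Icc 0 t)) (hmin : IsMinOn F (Icc 0 t) t) {ε : ℝ}
    (hε : ε ∈ Ioo 0 t) :
    ∫ s in 0..t - ε, (t - s) ^ (-α) * F' s ≤ ε ^ (-α) * (F (t - ε) - F t) := by
  obtain ⟨hε0, hεt⟩ := hε
  have hI : uIcc 0 (t - ε) = Icc 0 (t - ε) := uIcc_of_le (by linarith)
  have hsub : Icc 0 (t - ε) ⊆ Icc 0 t := Icc_subset_Icc_right (by linarith)
  have hpos : ∀ s ∈ Icc 0 (t - ε), 0 < t - s := fun s hs => by linarith [hs.2]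
  have hkernel : ∀ s ∈ Icc 0 (t - ε),
      HasDerivAt (fun s => (t - s) ^ (-α)) (α * (t - s) ^ (-α - 1)) s := fun s hs => by
    convert ((hasDerivAt_id s).const_sub t).rpow_const (p := -α) (Or.inl (hpos s hs).ne')
      using 1
    · rfl
    · simp only [id]; ring
  have hkernel' : ContinuousOn (fun s => α * (t - s) ^ (-α - 1)) (Icc 0 (t - ε)) :=
    continuousOn_const.mul ((continuousOn_const.sub continuousOn_id).rpow_const
      fun s hs => Or.inl (hpos s hs).ne')
  have hparts := integral_mul_deriv_eq_deriv_mul_of_hasDerivWithinAt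
    (u := fun s => (t - s) ^ (-α)) (v := fun s => F s - F t)
    (fun s hs => (hkernel s (hI ▸ hs)).hasDerivWithinAt)
    (fun s hs => ((hF s (hsub (hI ▸ hs))).mono (hI ▸ hsub)).sub_const (F t))
    (hkernel'.intervalIntegrable_of_Icc (by linarith))
    ((hF'.mono hsub).intervalIntegrable_of_Icc (by linarith))
  have hrest : 0 ≤ ∫ s in 0..t - ε, α * (t - s) ^ (-α - 1) * (F s - F t) :=
    integral_nonneg (by linarith) fun s hs => by
      have := hpos s hs
      have := sub_nonneg.2 (isMinOn_iff.1 hmin s (hsub hs))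
      positivity
  have hstart : 0 ≤ (t - 0) ^ (-α) * (F 0 - F t) := by
    have := sub_nonneg.2 (isMinOn_iff.1 hmin 0 (left_mem_Icc.2 (by linarith)))
    exact mul_nonneg (Real.rpow_nonneg (by linarith) _) this
  rw [hparts, sub_sub_cancel]
  linarith

lemma integral_sub_rpow_neg_mul_nonpos_of_isMinOn (hα0 : 0 ≤ α) (hα1 : α < 1) (ht : 0 < t)
    {F F' : ℝ → ℝ} (hF : ∀ s ∈ Icc 0 t, HasDerivWithinAt F (F' s) (Icc 0 t) s)
    (hF' : ContinuousOn F' (Icc 0 t)) (hmin : IsMinOn F (Icc 0 t) t) :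
    ∫ s in 0..t, (t - s) ^ (-α) * F' s ≤ 0 := by
  obtain ⟨M, hM⟩ := isCompact_Icc.exists_bound_of_continuousOn hF'
  have hboundary : ∀ ε ∈ Ioo 0 t, F (t - ε) - F t ≤ M * ε := fun ε hε => by
    have := (convex_Icc 0 t).norm_image_sub_le_of_norm_hasDerivWithin_le hF hM
      (right_mem_Icc.2 ht.le) (⟨by linarith [hε.2], by linarith [hε.1]⟩ : t - ε ∈ Icc 0 t)
    rw [show t - ε - t = -ε by ring, norm_neg, Real.norm_of_nonneg hε.1.le] at this
    exact (le_abs_self _).trans this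
  have hprimitive : Tendsto (fun ε => ∫ s in 0..t - ε, (t - s) ^ (-α) * F' s) (𝓝[>] 0)
      (𝓝 (∫ s in 0..t, (t - s) ^ (-α) * F' s)) := by
    have hcont := continuousOn_primitive_interval' (a := 0)
      (intervalIntegrable_sub_rpow_neg_mul hα1 ht.le hF') left_mem_uIcc
    refine (hcont t right_mem_uIcc).tendsto.comp (tendsto_nhdsWithin_iff.2 ⟨?_, ?_⟩)
    · have := (continuous_sub_left t).tendsto (0:ℝ) |>.mono_left
        (nhdsWithin_le_nhds (s := Ioi 0))
      simpa only [sub_zero] using this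
    · filter_upwards [Ioo_mem_nhdsGT ht] with ε hε
      rw [uIcc_of_le ht.le]
      exact ⟨by linarith [hε.2], by linarith [hε.1]⟩
  have hbound : Tendsto (fun ε : ℝ => M * ε ^ (1 - α)) (𝓝[>] 0) (𝓝 0) := by
    have := ((Real.continuousAt_rpow_const 0 (1 - α) (Or.inr (by linarith))).tendsto.const_mul
      M).mono_left (nhdsWithin_le_nhds (s := Ioi 0))
    rwa [Real.zero_rpow (by linarith), mul_zero] at this
  refine le_of_tendsto_of_tendsto hprimitive hbound ?_
  filter_upwards [Ioo_mem_nhdsGT ht] with ε hε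
  calc ∫ s in 0..t - ε, (t - s) ^ (-α) * F' s ≤ ε ^ (-α) * (F (t - ε) - F t) :=
        integral_sub_rpow_neg_mul_le_of_isMinOn hα0 hF hF' hmin hε
    _ ≤ ε ^ (-α) * (M * ε) :=
        mul_le_mul_of_nonneg_left (hboundary ε hε) (Real.rpow_nonneg hε.1.le _)
    _ = M * ε ^ (1 - α) := by
        rw [sub_eq_neg_add, Real.rpow_add hε.1, Real.rpow_one]; ring

lemma caputo_nonpos_of_isMinOn (hα0 : 0 ≤ α) (hα1 : α < 1) (ht : 0 < t) {F : ℝ → ℝ}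
    (hF : ContDiffOn ℝ 1 F (Icc 0 t)) (hmin : IsMinOn F (Icc 0 t) t) : caputo α F t ≤ 0 := by
  have hΓ : 0 < Real.Gamma (1 - α) := Real.Gamma_pos_of_pos (by linarith)
  rw [caputo_eq_integral_derivWithin ht.le]
  exact mul_nonpos_of_nonneg_of_nonpos (by positivity)
    (integral_sub_rpow_neg_mul_nonpos_of_isMinOn hα0 hα1 ht
      (fun s hs => (hF.differentiableOn one_ne_zero s hs).hasDerivWithinAt)
      (hF.continuousOn_derivWithin (uniqueDiffOn_Icc ht) le_rfl) hmin)

end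

theorem stmt_17_general (T α p : ℝ) (hα0 : 0 < α) (hα1 : α < 1) (hp : 2 ≤ p)
    (ω : ℝ → ℝ) (hnonneg : ∀ t ∈ Set.Icc (0:ℝ) T, 0 ≤ ω t)
    (hω : ContDiffOn ℝ 1 ω (Set.Icc 0 T))
    (hωp : ContDiffOn ℝ 1 (fun s => |ω s| ^ (p / 2)) (Set.Icc 0 T)) :
    ∀ t ∈ Set.Ioc (0:ℝ) T,
      (2 / p) * caputo α (fun s => |ω s| ^ (p / 2)) t ≤
        |ω t| ^ ((p - 2) / 2) * caputo α ω t := by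
  rintro t ⟨ht, htT⟩
  have hsub : Icc 0 t ⊆ Icc 0 T := Icc_subset_Icc_right htT
  have hc : 0 ≤ ω t := hnonneg t ⟨ht.le, htT⟩
  have hmin : IsMinOn (fun s => 2 / p * |ω s| ^ (p / 2) + -(ω t ^ (p / 2 - 1)) * ω s)
      (Icc 0 t) t := isMinOn_iff.2 fun s hs => by
    have ha := hnonneg s (hsub hs)
    have := mul_rpow_sub_one_mul_sub_le_rpow_sub_rpow (by linarith : 1 ≤ p / 2) ha hc
    rw [abs_of_nonneg ha, abs_of_nonneg hc]
    field_simp at this ⊢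
    linarith
  have hcaputo := caputo_nonpos_of_isMinOn hα0.le hα1 ht
    ((contDiffOn_const.mul (hωp.mono hsub)).add (contDiffOn_const.mul (hω.mono hsub))) hmin
  rw [caputo_const_mul_add_const_mul hα1 ht _ _ (hωp.mono hsub) (hω.mono hsub)] at hcaputo
  rw [abs_of_nonneg hc, show (p - 2) / 2 = p / 2 - 1 by ring]
  linarith

theorem stmt_17 (T α p : ℝ) (hT : 0 < T) (hα0 : 0 < α) (hα1 : α < 1) (hp : 2 ≤ p)
    (ω : ℝ → ℝ) (hnonneg : ∀ t ∈ Set.Icc (0:ℝ) T, 0 ≤ ω t)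
    (hω : ContDiffOn ℝ 1 ω (Set.Icc 0 T))
    (hωp : ContDiffOn ℝ 1 (fun s => |ω s| ^ (p / 2)) (Set.Icc 0 T)) :
    ∀ t ∈ Set.Ioc (0:ℝ) T,
      (2 / p) * caputo α (fun s => |ω s| ^ (p / 2)) t ≤
        |ω t| ^ ((p - 2) / 2) * caputo α ω t :=
  stmt_17_general T α p hα0 hα1 hp ω hnonneg hω hωp
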